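/- arXiv:1806.03955 — 2 statements merged into one kernel-verified Lean document; each statement's English description precedes it below -/
import Mathlib

section
/- Let I and J be ideals of R = ℂ[x,y] with 𝔪·I ⊆ J ⊆ I and dim_ℂ R/J finite. Set n = dim_ℂ R/I and r = dim_ℂ I/J. Then n ≥ r(r-1)/2. -/
/-!
Let `d` be the order of `I`, the largest `d` with `I ⊆ 𝔪^d`. Then `R/I` surjects onto the space of
polynomials of degree `< d`, so `n ≥ d(d+1)/2`, and it remains to show `r ≤ d + 1`.

Filter `I/J` by the images `F_t` of `I ∩ 𝔪^t` and let `in_t(I)` be the space of degree-`t` initial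
forms of `I ∩ 𝔪^t`. Passing to initial forms gives
`dim F_t - dim F_{t+1} ≤ dim in_t(I) - dim in_t(J)`. Since `𝔪I ⊆ J`, the space `x·in_t(I) + y·in_t(I)` lies in `in_{t+1}(J)`, and its dimension exceeds
`dim in_t(I)` when `in_t(I) ≠ 0`: otherwise `y^k·in_t(I) ⊆ x^k·in_t(I)` for every `k`. Summing over
`t ≥ d`, with `dim in_t(I) ≤ t + 1` and `F_t = 0` for large `t` (Artin–Rees), the differences
telescope to `r = dim F_d ≤ d + 1`.
-/

open MvPolynomial

noncomputable section

/-- The polynomial ring `R = ℂ[x,y]`. -/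
abbrev Rpoly : Type := MvPolynomial (Fin 2) ℂ

/-- The maximal ideal `𝔪 = ⟨x, y⟩` of `R` at the origin. -/
def mIdeal : Ideal Rpoly := Ideal.span {X 0, X 1}

/-- `dim_ℂ I/J` for ideals `J ⊆ I`, computed as the ℂ-dimension of the image of `I`
in `R/J`. -/
noncomputable def relDim (I J : Ideal Rpoly) : ℕ :=
  Module.finrank ℂ (Submodule.restrictScalars ℂ (I.map (Ideal.Quotient.mk J)))

open Module

namespace MvPolynomial

section CommSemiring

variable {σ R : Type*} [CommSemiring R]

attribute [local instance] gradedAlgebra in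
theorem homogeneousComponent_X_mul (i : σ) (t : ℕ) (p : MvPolynomial σ R) :
    homogeneousComponent (t + 1) (X i * p) = X i * homogeneousComponent t p := by
  have := DirectSum.coe_decompose_mul_of_left_mem_of_le (homogeneousSubmodule σ R)
    (b := p) (isHomogeneous_X R i) (Nat.le_add_left 1 t)
  rw [← decomposition.decompose'_apply, ← decomposition.decompose'_apply]
  exact this

theorem homogeneousComponent_eq_zero_of_mem_pow_idealOfVars {p : MvPolynomial σ R} {s t : ℕ}
    (hp : p ∈ idealOfVars σ R ^ t) (hs : s < t) : homogeneousComponent s p = 0 := by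
  ext u
  rw [coeff_homogeneousComponent, coeff_zero]
  split_ifs with hu
  · exact (mem_pow_idealOfVars_iff' t p).1 hp u (hu ▸ hs)
  · rfl

theorem mem_pow_idealOfVars_succ_iff {p : MvPolynomial σ R} {t : ℕ} :
    p ∈ idealOfVars σ R ^ (t + 1) ↔
      p ∈ idealOfVars σ R ^ t ∧ homogeneousComponent t p = 0 := by
  refine ⟨fun h => ⟨Ideal.pow_le_pow_right t.le_succ h,
    homogeneousComponent_eq_zero_of_mem_pow_idealOfVars h t.lt_succ_self⟩, ?_⟩
  rintro ⟨h, h'⟩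
  rw [mem_pow_idealOfVars_iff'] at h ⊢
  intro u hu
  rcases Nat.lt_succ_iff_lt_or_eq.1 hu with hu | rfl
  · exact h u hu
  · simpa [coeff_homogeneousComponent] using congrArg (coeff u) h'

end CommSemiring

variable {σ K : Type*} [Field K]

instance [Finite σ] (n : ℕ) : FiniteDimensional K (homogeneousSubmodule σ K n) :=
  Module.Finite.iff_fg.mpr (homogeneousSubmodule_fg σ K n)

theorem finrank_homogeneousSubmodule [Fintype σ] (n : ℕ) :
    finrank K (homogeneousSubmodule σ K n) = (Fintype.card σ + n - 1).choose n := by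
  classical
  have hs : {d : σ →₀ ℕ | d.degree = n} =
      ↑((Finset.univ : Finset σ).finsuppAntidiag n) := by
    ext d
    simp [Finsupp.degree_eq_sum]
  rw [homogeneousSubmodule_eq_finsupp_supported, ← restrictSupport,
    finrank_eq_nat_card_basis (basisRestrictSupport K _), hs, Nat.card_coe_set_eq,
    Set.ncard_coe_finset, Finset.card_finsuppAntidiag_nat_eq_choose, Finset.card_univ]

end MvPolynomial

namespace Submodule

variable {K M A B : Type*} [Field K] [AddCommGroup M] [Module K M] [AddCommGroup A] [Module K A]
  [AddCommGroup B] [Module K B]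

theorem finrank_map_add_finrank_inf_ker (Q : Submodule K M) [FiniteDimensional K Q]
    (g : M →ₗ[K] A) :
    finrank K (Q.map g) + finrank K ↥(Q ⊓ LinearMap.ker g) = finrank K Q := by
  rw [← LinearMap.range_domRestrict, ← map_comap_subtype, ← LinearMap.ker_domRestrict,
    ← (equivMapOfInjective _ Q.injective_subtype _).finrank_eq]
  exact (g.domRestrict Q).finrank_range_add_finrank_ker

theorem finrank_map_le_of_inf_ker_le {P : Submodule K M} (α : M →ₗ[K] A) (θ : M →ₗ[K] B)
    (h : P ⊓ LinearMap.ker θ ≤ LinearMap.ker α) [FiniteDimensional K (P.map θ)] :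
    finrank K (P.map α) ≤ finrank K (P.map θ) := by
  have hker : LinearMap.ker (θ.domRestrict P) ≤ LinearMap.ker (α.domRestrict P) := by
    intro x hx
    simpa using h ⟨x.2, by simpa using hx⟩
  have e := (θ.domRestrict P).quotKerEquivRange
  rw [LinearMap.range_domRestrict] at e
  have := Module.Finite.equiv e.symm
  rw [← LinearMap.range_domRestrict, ← range_liftQ _ _ hker, ← e.finrank_eq]
  exact LinearMap.finrank_range_le _

theorem finrank_map_le_finrank_add_finrank_map {P : Submodule K M} (f : M →ₗ[K] A)
    (θ : M →ₗ[K] B) (N : Submodule K A) (h : P ⊓ LinearMap.ker θ ≤ N.comap f)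
    [FiniteDimensional K (P.map f)] [FiniteDimensional K N] [FiniteDimensional K (P.map θ)] :
    finrank K (P.map f) ≤ finrank K N + finrank K (P.map θ) := by
  have hrank := finrank_map_add_finrank_inf_ker (P.map f) N.mkQ
  have hmap : finrank K ((P.map f).map N.mkQ) ≤ finrank K (P.map θ) := by
    rw [← map_comp]
    exact finrank_map_le_of_inf_ker_le _ _ (by rwa [LinearMap.ker_comp, ker_mkQ])
  have hinf : finrank K ↥(P.map f ⊓ LinearMap.ker N.mkQ) ≤ finrank K N := by
    rw [ker_mkQ]
    exact finrank_mono inf_le_right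
  omega

end Submodule

namespace Ideal

variable {R : Type*} [CommRing R]

theorem exists_le_pow_and_not_le_pow_succ {I 𝔞 : Ideal R} (h : ∃ t, ¬I ≤ 𝔞 ^ t) :
    ∃ d, I ≤ 𝔞 ^ d ∧ ¬I ≤ 𝔞 ^ (d + 1) := by
  classical
  have h0 : Nat.find h ≠ 0 := fun h0 => by simpa [h0] using Nat.find_spec h
  refine ⟨Nat.find h - 1, ?_, ?_⟩
  · exact not_not.1 (Nat.find_min h (by omega))
  · simpa [Nat.sub_add_cancel (Nat.pos_of_ne_zero h0)] using Nat.find_spec h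

theorem exists_inf_pow_le_mul [IsNoetherianRing R] (𝔞 I : Ideal R) :
    ∃ T, ∀ t ≥ T, I ⊓ 𝔞 ^ t ≤ 𝔞 * I := by
  obtain ⟨k, hk⟩ := exists_pow_inf_eq_pow_smul 𝔞 I
  refine ⟨k + 1, fun t ht => ?_⟩
  have := hk t (by omega)
  simp only [smul_eq_mul, mul_top] at this
  rw [inf_comm, this]
  exact mul_mono (pow_le_self (by omega)) inf_le_right

end Ideal

/-- From `d` on, `f (t + 1) + a t` grows by at least one per step, and once `f` has vanished it is
at most `t + 1`; hence it starts at most at `d + 1`. -/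
theorem Nat.le_succ_of_jumps {f a b : ℕ → ℕ} {d T : ℕ}
    (hstep : ∀ t, f t + b t ≤ f (t + 1) + a t) (hba : ∀ t, b t ≤ a t)
    (hjump : ∀ t, 0 < a t → a t + 1 ≤ b (t + 1)) (hbound : ∀ t, a t ≤ t + 1)
    (hvanish : ∀ t ≥ T, f t = 0) (hd : 0 < a d) : f d ≤ d + 1 := by
  have hpos : ∀ k, 0 < a (d + k) := by
    intro k
    induction k with
    | zero => exact hd
    | succ k ih => exact (Nat.succ_pos _).trans_le ((hjump _ ih).trans (hba _))
  have hgrowth : ∀ k, f (d + 1) + a d + k ≤ f (d + k + 1) + a (d + k) := by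
    intro k
    induction k with
    | zero => simp
    | succ k ih =>
      have hjump_k := hjump _ (hpos k)
      have hstep_k := hstep (d + k + 1)
      rw [show d + (k + 1) = d + k + 1 by omega]
      omega
  have hT := hgrowth T
  have hfT := hvanish (d + T + 1) (by omega)
  have haT := hbound (d + T)
  have hstep_d := hstep d
  omega

namespace MvPolynomial

variable {σ K : Type*} [Field K]

def initialForms (I : Ideal (MvPolynomial σ K)) (t : ℕ) : Submodule K (MvPolynomial σ K) :=
  ((I ⊓ idealOfVars σ K ^ t).restrictScalars K).map (homogeneousComponent t)

def orderFiltration (I J : Ideal (MvPolynomial σ K)) (t : ℕ) :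
    Submodule K (MvPolynomial σ K ⧸ J) :=
  ((I ⊓ idealOfVars σ K ^ t).restrictScalars K).map (Ideal.Quotient.mkₐ K J).toLinearMap

variable {I J : Ideal (MvPolynomial σ K)}

theorem initialForms_le_homogeneousSubmodule (I : Ideal (MvPolynomial σ K)) (t : ℕ) :
    initialForms I t ≤ homogeneousSubmodule σ K t := by
  rintro _ ⟨p, -, rfl⟩
  exact homogeneousComponent_mem t p

instance [Finite σ] (I : Ideal (MvPolynomial σ K)) (t : ℕ) :
    FiniteDimensional K (initialForms I t) :=
  Submodule.finiteDimensional_of_le (initialForms_le_homogeneousSubmodule I t)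

theorem initialForms_mono (hJI : J ≤ I) (t : ℕ) : initialForms J t ≤ initialForms I t :=
  Submodule.map_mono (inf_le_inf_right _ hJI)

theorem X_mul_mem_initialForms (hmJ : idealOfVars σ K * I ≤ J) (i : σ) {t : ℕ}
    {v : MvPolynomial σ K} (hv : v ∈ initialForms I t) : X i * v ∈ initialForms J (t + 1) := by
  obtain ⟨p, ⟨hpI, hpt⟩, rfl⟩ := hv
  refine ⟨X i * p, ⟨hmJ (Ideal.mul_mem_mul (Ideal.subset_span ⟨i, rfl⟩) hpI), ?_⟩,
    homogeneousComponent_X_mul i t p⟩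
  rw [pow_succ']
  exact Ideal.mul_mem_mul (Ideal.subset_span ⟨i, rfl⟩) hpt

theorem le_pow_succ_of_initialForms_eq_bot {t : ℕ} (hI : I ≤ idealOfVars σ K ^ t)
    (h : initialForms I t = ⊥) : I ≤ idealOfVars σ K ^ (t + 1) := fun p hp =>
  mem_pow_idealOfVars_succ_iff.2 ⟨hI hp,
    (Submodule.mem_bot K).1 (h ▸ ⟨p, ⟨hp, hI hp⟩, rfl⟩)⟩

theorem orderFiltration_eq_bot {t : ℕ} (h : I ⊓ idealOfVars σ K ^ t ≤ J) :
    orderFiltration I J t = ⊥ := by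
  rw [eq_bot_iff]
  rintro _ ⟨p, hp, rfl⟩
  exact (Submodule.mem_bot K).2 (Ideal.Quotient.eq_zero_iff_mem.2 (h hp))

theorem finrank_orderFiltration_add_le [Finite σ] [FiniteDimensional K (MvPolynomial σ K ⧸ J)]
    (hJI : J ≤ I) (t : ℕ) :
    finrank K (orderFiltration I J t) + finrank K (initialForms J t) ≤
      finrank K (orderFiltration I J (t + 1)) + finrank K (initialForms I t) := by
  set θ := (initialForms J t).mkQ ∘ₗ homogeneousComponent t
  have hker : (I ⊓ idealOfVars σ K ^ t).restrictScalars K ⊓ LinearMap.ker θ ≤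
      (orderFiltration I J (t + 1)).comap (Ideal.Quotient.mkₐ K J).toLinearMap := by
    rintro p ⟨⟨hpI, hpt⟩, hp⟩
    obtain ⟨q, ⟨hqJ, hqt⟩, hq⟩ : homogeneousComponent t p ∈ initialForms J t := by
      simpa [θ] using hp
    refine ⟨p - q, ⟨I.sub_mem hpI (hJI hqJ), mem_pow_idealOfVars_succ_iff.2
      ⟨Ideal.sub_mem _ hpt hqt, by simp [hq]⟩⟩, ?_⟩
    simp [Ideal.Quotient.eq_zero_iff_mem.2 hqJ]
  have hθ : ((I ⊓ idealOfVars σ K ^ t).restrictScalars K).map θ =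
      (initialForms I t).map (initialForms J t).mkQ := Submodule.map_comp _ _ _
  have : FiniteDimensional K (((I ⊓ idealOfVars σ K ^ t).restrictScalars K).map θ) := by
    rw [hθ]; infer_instance
  have hF : finrank K (orderFiltration I J t) ≤ finrank K (orderFiltration I J (t + 1)) +
      finrank K ((initialForms I t).map (initialForms J t).mkQ) := by
    rw [← hθ]
    exact Submodule.finrank_map_le_finrank_add_finrank_map _ θ _ hker
  have hquot := Submodule.finrank_map_add_finrank_inf_ker (initialForms I t) (initialForms J t).mkQ
  rw [Submodule.ker_mkQ, inf_eq_right.2 (initialForms_mono hJI t)] at hquot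
  omega

theorem sum_finrank_homogeneousSubmodule_le [Finite σ] {I : Ideal (MvPolynomial σ K)} {d : ℕ}
    [FiniteDimensional K (MvPolynomial σ K ⧸ I)] (hI : I ≤ idealOfVars σ K ^ d) :
    ∑ t ∈ Finset.range d, finrank K (homogeneousSubmodule σ K t) ≤
      finrank K (MvPolynomial σ K ⧸ I) := by
  let g : MvPolynomial σ K →ₗ[K] ((t : Fin d) → homogeneousSubmodule σ K t) :=
    LinearMap.pi fun t => (homogeneousComponent t).codRestrict _ (homogeneousComponent_mem t)
  have hg : Function.Surjective g := by
    intro b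
    refine ⟨∑ s, (b s : MvPolynomial σ K), ?_⟩
    funext t
    apply Subtype.ext
    change homogeneousComponent t (∑ s, (b s : MvPolynomial σ K)) = b t
    rw [map_sum, Finset.sum_eq_single t]
    · exact homogeneousComponent_of_mem (b t).2 |>.trans (if_pos rfl)
    · intro s _ hst
      rw [homogeneousComponent_of_mem (b s).2, if_neg (fun h => hst (Fin.ext h.symm))]
    · simp
  have hker : ⊤ ⊓ LinearMap.ker (Ideal.Quotient.mkₐ K I).toLinearMap ≤ LinearMap.ker g := by
    rintro p ⟨-, hp⟩
    have hp : p ∈ I := Ideal.Quotient.eq_zero_iff_mem.1 hp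
    funext t
    exact Subtype.ext (homogeneousComponent_eq_zero_of_mem_pow_idealOfVars (hI hp) t.2)
  have := Submodule.finrank_map_le_of_inf_ker_le _ _ hker
  rw [Submodule.map_top, Submodule.map_top, LinearMap.range_eq_top.2 hg,
    LinearMap.range_eq_top.2 (Ideal.Quotient.mkₐ_surjective K I), finrank_top, finrank_top,
    finrank_pi_fintype] at this
  rwa [← Fin.sum_univ_eq_sum_range]

section TwoVariables

variable {K : Type*} [Field K]

theorem eq_bot_of_map_mulLeft_X_one_le {V : Submodule K (MvPolynomial (Fin 2) K)} {t : ℕ}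
    (hV : V ≤ homogeneousSubmodule (Fin 2) K t)
    (h : V.map (LinearMap.mulLeft K (X 1)) ≤ V.map (LinearMap.mulLeft K (X 0))) : V = ⊥ := by
  have hpow : ∀ k, ∀ p ∈ V, ∃ q ∈ V, X 1 ^ k * p = X 0 ^ k * q := by
    intro k
    induction k with
    | zero => exact fun p hp => ⟨p, hp, by simp⟩
    | succ k ih =>
      intro p hp
      obtain ⟨p', hp', hp'e⟩ := h ⟨p, hp, rfl⟩
      obtain ⟨q, hq, hqe⟩ := ih p' hp'
      refine ⟨q, hq, ?_⟩
      simp only [LinearMap.mulLeft_apply] at hp'e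
      calc X 1 ^ (k + 1) * p = X 1 ^ k * (X 1 * p) := by ring
        _ = X 0 * (X 1 ^ k * p') := by rw [← hp'e]; ring
        _ = X 0 ^ (k + 1) * q := by rw [hqe]; ring
  rw [Submodule.eq_bot_iff]
  intro p hp
  by_contra hne
  obtain ⟨u, hu⟩ := ne_zero_iff.1 hne
  have hdeg : u 0 + u 1 = t := by
    by_contra hd
    exact hu ((hV hp).coeff_eq_zero
      (by simpa [Finsupp.degree_eq_sum, Fin.sum_univ_two] using hd))
  obtain ⟨q, -, hq⟩ := hpow (t + 1) p hp
  -- the monomial `y^(t+1) u` occurs in `y^(t+1) p`, but not in `x^(t+1) q` since `u 0 ≤ t`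
  have := congrArg (coeff (Finsupp.single 1 (t + 1) + u)) hq
  rw [X_pow_eq_monomial, X_pow_eq_monomial, coeff_monomial_mul, coeff_monomial_mul',
    if_neg] at this
  · exact hu (by simpa using this)
  · intro hle
    have : t < u 0 := by simpa using hle 0
    omega

theorem finrank_add_one_le_finrank_sup_map_X {V : Submodule K (MvPolynomial (Fin 2) K)} {t : ℕ}
    (hV : V ≤ homogeneousSubmodule (Fin 2) K t) (hne : V ≠ ⊥) :
    finrank K V + 1 ≤
      finrank K ↥(V.map (LinearMap.mulLeft K (X 0)) ⊔ V.map (LinearMap.mulLeft K (X 1))) := by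
  have hmap : ∀ i,
      V.map (LinearMap.mulLeft K (X i)) ≤ homogeneousSubmodule (Fin 2) K (t + 1) := by
    rintro i _ ⟨p, hp, rfl⟩
    simpa [add_comm] using (isHomogeneous_X K i).mul (hV hp)
  have : FiniteDimensional K
      ↥(V.map (LinearMap.mulLeft K (X 0)) ⊔ V.map (LinearMap.mulLeft K (X 1))) :=
    Submodule.finiteDimensional_of_le (sup_le (hmap 0) (hmap 1))
  have hlt : V.map (LinearMap.mulLeft K (X 0)) <
      V.map (LinearMap.mulLeft K (X 0)) ⊔ V.map (LinearMap.mulLeft K (X 1)) :=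
    left_lt_sup.2 fun h => hne (eq_bot_of_map_mulLeft_X_one_le hV h)
  have hinj : finrank K (V.map (LinearMap.mulLeft K (X 0))) = finrank K V :=
    (Submodule.equivMapOfInjective _ (mul_right_injective₀ (X_ne_zero 0)) V).finrank_eq.symm
  have := Submodule.finrank_lt_finrank_of_lt hlt
  omega

variable {I J : Ideal (MvPolynomial (Fin 2) K)}

theorem finrank_homogeneousSubmodule_fin_two (t : ℕ) :
    finrank K (homogeneousSubmodule (Fin 2) K t) = t + 1 := by
  simp [finrank_homogeneousSubmodule, add_comm 2]

theorem finrank_initialForms_le (I : Ideal (MvPolynomial (Fin 2) K)) (t : ℕ) :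
    finrank K (initialForms I t) ≤ t + 1 :=
  (Submodule.finrank_mono (initialForms_le_homogeneousSubmodule I t)).trans_eq
    (finrank_homogeneousSubmodule_fin_two t)

theorem finrank_initialForms_add_one_le (hmJ : idealOfVars (Fin 2) K * I ≤ J) {t : ℕ}
    (h : initialForms I t ≠ ⊥) :
    finrank K (initialForms I t) + 1 ≤ finrank K (initialForms J (t + 1)) := by
  refine (finrank_add_one_le_finrank_sup_map_X (initialForms_le_homogeneousSubmodule I t) h).trans
    (Submodule.finrank_mono (sup_le ?_ ?_)) <;>
  · rintro _ ⟨v, hv, rfl⟩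
    exact X_mul_mem_initialForms hmJ _ hv

theorem mul_succ_div_two_le_finrank {d : ℕ} [FiniteDimensional K (MvPolynomial (Fin 2) K ⧸ I)]
    (hI : I ≤ idealOfVars (Fin 2) K ^ d) :
    d * (d + 1) / 2 ≤ finrank K (MvPolynomial (Fin 2) K ⧸ I) := by
  have := sum_finrank_homogeneousSubmodule_le hI
  simp only [finrank_homogeneousSubmodule_fin_two] at this
  have hgauss := Finset.sum_range_id_mul_two (d + 1)
  rw [Finset.sum_range_succ', add_zero, Nat.add_sub_cancel, mul_comm (d + 1)] at hgauss
  omega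

theorem finrank_orderFiltration_zero_le [FiniteDimensional K (MvPolynomial (Fin 2) K ⧸ J)]
    (hJI : J ≤ I) (hmJ : idealOfVars (Fin 2) K * I ≤ J) {d : ℕ}
    (hd : I ≤ idealOfVars (Fin 2) K ^ d) (hd' : ¬I ≤ idealOfVars (Fin 2) K ^ (d + 1)) :
    finrank K (orderFiltration I J 0) ≤ d + 1 := by
  obtain ⟨T, hT⟩ := Ideal.exists_inf_pow_le_mul (idealOfVars (Fin 2) K) I
  have h0 : orderFiltration I J 0 = orderFiltration I J d := by
    simp [orderFiltration, inf_eq_left.2 hd]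
  rw [h0]
  have hvanish : ∀ t ≥ T, finrank K (orderFiltration I J t) = 0 := fun t ht => by
    rw [orderFiltration_eq_bot ((hT t ht).trans hmJ), finrank_bot]
  have hpos : 0 < finrank K (initialForms I d) := Nat.pos_of_ne_zero fun h =>
    hd' (le_pow_succ_of_initialForms_eq_bot hd (Submodule.finrank_eq_zero.1 h))
  exact Nat.le_succ_of_jumps (finrank_orderFiltration_add_le hJI)
    (fun t => Submodule.finrank_mono (initialForms_mono hJI t))
    (fun t ht => finrank_initialForms_add_one_le hmJ fun h =>
      ht.ne' (Submodule.finrank_eq_zero.2 h))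
    (finrank_initialForms_le I) hvanish hpos

end TwoVariables

end MvPolynomial

theorem mIdeal_eq_idealOfVars : mIdeal = idealOfVars (Fin 2) ℂ := by
  rw [mIdeal, idealOfVars]
  congr 1
  ext
  simp [Fin.exists_fin_two, eq_comm]

theorem relDim_eq_finrank_orderFiltration (I J : Ideal Rpoly) :
    relDim I J = finrank ℂ (orderFiltration I J 0) := by
  have : (I.map (Ideal.Quotient.mk J)).restrictScalars ℂ =
      (I.restrictScalars ℂ).map (Ideal.Quotient.mkₐ ℂ J).toLinearMap := by
    ext z
    simp [Ideal.mem_map_iff_of_surjective _ Ideal.Quotient.mk_surjective]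
  rw [relDim, orderFiltration, pow_zero, Ideal.one_eq_top, inf_top_eq, this]

/-- If `𝔪·I ⊆ J ⊆ I` are ideals of `R = ℂ[x,y]` with `dim_ℂ R/J` finite,
`n = dim_ℂ R/I` and `r = dim_ℂ I/J`, then `n ≥ r(r-1)/2`. -/
theorem stmt2 (I J : Ideal Rpoly) (hJI : J ≤ I) (hmJ : mIdeal * I ≤ J)
    (hfin : FiniteDimensional ℂ (Rpoly ⧸ J)) (n r : ℕ)
    (hn : Module.finrank ℂ (Rpoly ⧸ I) = n)
    (hr : relDim I J = r) :
    r * (r - 1) / 2 ≤ n := by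
  rw [mIdeal_eq_idealOfVars] at hmJ
  have : FiniteDimensional ℂ (Rpoly ⧸ I) :=
    Module.Finite.of_surjective (Ideal.Quotient.factorₐ ℂ hJI).toLinearMap
      (Ideal.Quotient.factor_surjective hJI)
  subst hn hr
  rw [relDim_eq_finrank_orderFiltration]
  by_cases hI : ∀ t, I ≤ idealOfVars (Fin 2) ℂ ^ t
  · obtain ⟨T, hT⟩ := Ideal.exists_inf_pow_le_mul (idealOfVars (Fin 2) ℂ) I
    have hIJ : I ≤ J := (le_inf le_rfl (hI T)).trans ((hT T le_rfl).trans hmJ)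
    rw [orderFiltration_eq_bot (inf_le_left.trans hIJ), finrank_bot]
    exact Nat.zero_le _
  · push Not at hI
    obtain ⟨d, hd, hd'⟩ := Ideal.exists_le_pow_and_not_le_pow_succ hI
    have hrd := finrank_orderFiltration_zero_le hJI hmJ hd hd'
    calc _ ≤ (d + 1) * d / 2 := Nat.div_le_div_right (Nat.mul_le_mul hrd (by omega))
      _ = d * (d + 1) / 2 := by rw [mul_comm]
      _ ≤ _ := mul_succ_div_two_le_finrank hd

end
end

section
/- For every m ≥ 1, the following identity holds in K[[q]] with K = ℚ(t): ∏_{d=1}^{∞} (1 − t^{d+1} q^d)^{−1} · ∑_{k=0}^{∞} (−1)^{k−m} · t^{(k−m)(k−m−1)/2} · [k choose m]_t · q^{k(k−1)/2} · ∏_{d=1}^{k} (1 − t^{d} q^{d})^{−1} = ∏_{i=1}^{m−1} (1 − t^{i+1})^{−1} · ∑_{a=1}^{m} (−1)^{a} · t^{a(a−1)/2 + m} · [m choose a]_t · ∏_{k=0}^{∞} (1 − t^{k−a} q^{k}) · (1 − t^{k+1} q^{k})^{−1}. (The left-hand side is the generating function ∑_n E(H^{[n]}_m; t) q^n of the E-polynomials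 of the strata of the Hilbert scheme of points on ℂ² by number of generators at the origin, and the right-hand side is its closed form.) -/
noncomputable section

/-- The field `K = ℚ(t)` of rational functions. -/
abbrev K : Type := RatFunc ℚ

/-- `K` is given the discrete topology. -/
instance : TopologicalSpace K := ⊥

/-- `K[[q]]` is given the topology of coefficientwise convergence, under which the
infinite products and sums below converge. -/
instance : TopologicalSpace (PowerSeries K) :=
  TopologicalSpace.induced (fun f n => PowerSeries.coeff (R := K) n f) Pi.topologicalSpace

/-- The indeterminate `t` of `K = ℚ(t)`. -/
noncomputable def t : K := RatFunc.X

/-- The Gaussian binomial coefficient `[m choose a]_t ∈ ℚ(t)`: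
`∏_{i=0}^{a-1} (1 - t^{m-i})/(1 - t^{i+1})` if `a ≤ m`, and `0` if `a > m`. -/
noncomputable def gb (m a : ℕ) : K :=
  if a ≤ m then ∏ i ∈ Finset.range a, (1 - t ^ (m - i)) / (1 - t ^ (i + 1)) else 0

/-!
Put `Q = t q` and `(Q;Q)_k = ∏_{d=1}^{k} (1 - Q^d)`. Letting `n → ∞` in the finite `q`-binomial
theorem `∏_{i<n} (1 - z Q^i) = ∑_k (-1)^k Q^{k(k-1)/2} [n choose k]_Q z^k` gives Euler's identity
`∏_{k≥0} (1 - z Q^k) = ∑_k (-z)^k Q^{k(k-1)/2} / (Q;Q)_k`, because `(Q;Q)_k [n choose k]_Q ≡ 1`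
modulo `Q^{n+1-k}`. At `z = t^{-a}` this turns the numerator of every infinite product on the right
into a series of the same shape as the one on the left. Summing over `a` and applying the finite `q`-binomial theorem
once more, now in `t` at `z = t^{-k}`, turns the coefficient of the `k`-th term into `(t;t)_m` times
the coefficient on the left, minus a multiple of Euler's series at `z = 1`; that series vanishes,
since the factor `k = 0` of its product is `1 - 1`. What is left is bookkeeping of the prefactors:
`∏_k (1 - t^{k+1} q^k) = (1 - t) ∏_d (1 - t^{d+2} q^{d+1})` and
`(t;t)_m = (1 - t) ∏_{i=1}^{m-1} (1 - t^{i+1})`.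
-/

open Finset Filter Topology

section QBinomial

variable {A : Type*} [CommRing A]

def qBinom (q : A) : ℕ → ℕ → A
  | _, 0 => 1
  | 0, _ + 1 => 0
  | n + 1, k + 1 => qBinom q n (k + 1) + q ^ (n - k) * qBinom q n k

@[simp] theorem qBinom_zero_right (q : A) (n : ℕ) : qBinom q n 0 = 1 := by
  cases n <;> rfl

theorem qBinom_succ_succ (q : A) (n k : ℕ) :
    qBinom q (n + 1) (k + 1) = qBinom q n (k + 1) + q ^ (n - k) * qBinom q n k := rfl

theorem qBinom_eq_zero_of_lt (q : A) {n k : ℕ} (h : n < k) : qBinom q n k = 0 := by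
  induction n generalizing k with
  | zero => obtain ⟨k, rfl⟩ := Nat.exists_eq_add_one_of_ne_zero (by omega : k ≠ 0); rfl
  | succ n ih =>
    obtain ⟨k, rfl⟩ := Nat.exists_eq_add_one_of_ne_zero (by omega : k ≠ 0)
    rw [qBinom_succ_succ, ih (by omega), ih (by omega), mul_zero, add_zero]

theorem prod_one_sub_mul_pow_eq_sum_qBinom (q x : A) (n : ℕ) :
    ∏ i ∈ range n, (1 - x * q ^ i) =
      ∑ k ∈ range (n + 1), (-1) ^ k * q ^ (k * (k - 1) / 2) * qBinom q n k * x ^ k := by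
  induction n with
  | zero => simp
  | succ n ih =>
    set T : ℕ → ℕ → A := fun n k => (-1) ^ k * q ^ (k * (k - 1) / 2) * qBinom q n k * x ^ k
    have hstep : ∀ k ∈ range (n + 1), T (n + 1) (k + 1) = T n (k + 1) - x * q ^ n * T n k := by
      intro k hk
      have hexp : (k + 1) * (k + 1 - 1) / 2 + (n - k) = k * (k - 1) / 2 + n := by
        rw [Nat.triangle_succ]; have := mem_range.1 hk; omega
      simp only [T, qBinom_succ_succ]
      linear_combination -(-1) ^ k * qBinom q n k * x ^ (k + 1) * congrArg (q ^ ·) hexp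
    have hlast : T n (n + 1) = 0 := by simp [T, qBinom_eq_zero_of_lt q (Nat.lt_succ_self n)]
    rw [prod_range_succ, ih, sum_range_succ' (T (n + 1)), sum_congr rfl hstep, sum_sub_distrib,
      ← mul_sum, sum_range_succ (fun k => T n (k + 1)), hlast, sum_range_succ' (T n)]
    simp only [T, pow_zero, Nat.zero_mul, Nat.zero_div, qBinom_zero_right, mul_one]
    ring

theorem prod_one_sub_pow_succ_mul_qBinom (q : A) (n k : ℕ) :
    (∏ i ∈ range k, (1 - q ^ (i + 1))) * qBinom q n k = ∏ i ∈ range k, (1 - q ^ (n - i)) := by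
  induction n generalizing k with
  | zero =>
    rcases k with _ | k
    · simp
    · rw [qBinom_eq_zero_of_lt q k.succ_pos, mul_zero, eq_comm]
      exact prod_eq_zero (mem_range.2 k.succ_pos) (by simp)
  | succ n ih =>
    rcases k with _ | k
    · simp
    rcases lt_or_ge n k with hnk | hkn
    · rw [qBinom_eq_zero_of_lt q (by omega), mul_zero, eq_comm]
      exact prod_eq_zero (mem_range.2 (by omega : n + 1 < k + 1)) (by simp)
    have hq : q ^ (k + 1) * q ^ (n - k) = q ^ (n + 1) := by rw [← pow_add]; congr 1; omega
    rw [qBinom_succ_succ, mul_add, ih, prod_range_succ (fun i => 1 - q ^ (i + 1)),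
      prod_range_succ, prod_range_succ' (fun i => 1 - q ^ (n + 1 - i))]
    simp only [Nat.add_sub_add_right, Nat.sub_zero]
    linear_combination (1 - q ^ (k + 1)) * q ^ (n - k) * ih k
      - (∏ i ∈ range k, (1 - q ^ (n - i))) * hq

end QBinomial

theorem dvd_prod_sub_one {A ι : Type*} [CommRing A] {s : Finset ι} {f : ι → A} {y : A}
    (h : ∀ i ∈ s, y ∣ f i - 1) : y ∣ ∏ i ∈ s, f i - 1 := by
  simp only [← Ideal.mem_span_singleton, ← Ideal.Quotient.eq, map_prod, map_one] at h ⊢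
  exact prod_eq_one h

theorem sub_one_le_triangle (n : ℕ) : n - 1 ≤ n * (n - 1) / 2 := by
  rw [Nat.le_div_iff_mul_le two_pos]
  rcases n with _ | _ | n <;> simp; nlinarith

theorem natCast_triangle (n : ℕ) : ((n * (n - 1) / 2 : ℕ) : ℤ) = n * (n - 1) / 2 := by
  rcases n with _ | n
  · simp
  · push_cast [Int.natCast_div]; simp

section Scalar

variable {F : Type*} [Field F] {q : F}

theorem pow_mul_prod_one_sub_zpow_mul_pow (hq : q ≠ 0) (m k : ℕ) :
    q ^ m * ((-1) ^ k * q ^ (k * (k - 1) / 2)) * ∏ i ∈ range m, (1 - q ^ (-(k : ℤ)) * q ^ i) =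
      (∏ i ∈ range m, (1 - q ^ (i + 1))) * ((-1) ^ ((k : ℤ) - m) *
        q ^ (((k : ℤ) - m) * ((k : ℤ) - m - 1) / 2) * qBinom q k m) := by
  set x := q ^ (-(k : ℤ)) with hx_def
  have hx : x * q ^ k = 1 := by rw [hx_def, zpow_neg, zpow_natCast, inv_mul_cancel₀ (pow_ne_zero k hq)]
  rcases lt_or_ge k m with hkm | hmk
  · rw [qBinom_eq_zero_of_lt q hkm, mul_zero, mul_zero, prod_eq_zero (mem_range.2 hkm)
      (by rw [hx, sub_self]), mul_zero]
  obtain ⟨j, hk⟩ := Nat.exists_eq_add_of_le hmk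
  have hfactor : ∀ i ∈ range m, 1 - x * q ^ i = -1 * (x * q ^ i) * (1 - q ^ (k - i)) := by
    intro i hi
    have : q ^ i * q ^ (k - i) = q ^ k := by
      rw [← pow_add]; congr 1; have := mem_range.1 hi; omega
    linear_combination -x * this - hx
  have hsign : (-1 : F) ^ k * (-1) ^ m = (-1) ^ j := by
    rw [← pow_add, hk, add_right_comm, ← two_mul, pow_add, pow_mul]; simp
  have hpow : q ^ m * q ^ (k * (k - 1) / 2) * q ^ (m * (m - 1) / 2) * x ^ m =
      q ^ (j * (j - 1) / 2) := by
    have hexp : m + k * (k - 1) / 2 + m * (m - 1) / 2 = j * (j - 1) / 2 + k * m := by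
      subst hk
      simp only [← Nat.choose_two_right]
      apply Nat.cast_injective (R := ℚ)
      push_cast [Nat.cast_choose_two]
      ring
    rw [← pow_add, ← pow_add, hexp, pow_add, pow_mul, mul_assoc, ← mul_pow,
      mul_comm _ x, hx, one_pow, mul_one]
  have hj : (k : ℤ) - m = j := by rw [hk]; push_cast; ring
  rw [prod_congr rfl hfactor, prod_mul_distrib, prod_mul_distrib, prod_mul_distrib, prod_const,
    prod_const, card_range, prod_pow_eq_pow_sum, sum_range_id, hj, zpow_natCast,
    ← natCast_triangle, zpow_natCast]
  calc _ = ((-1) ^ k * (-1) ^ m) * (q ^ m * q ^ (k * (k - 1) / 2) * q ^ (m * (m - 1) / 2) * x ^ m)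
        * ∏ i ∈ range m, (1 - q ^ (k - i)) := by ring
    _ = _ := by rw [hsign, hpow, ← prod_one_sub_pow_succ_mul_qBinom]; ring

theorem sum_Icc_qBinom_mul_zpow_pow (hq : q ≠ 0) (m k : ℕ) :
    ∑ a ∈ Icc 1 m, (-1) ^ a * q ^ (a * (a - 1) / 2 + m) * qBinom q m a *
        ((q ^ (-(a : ℤ))) ^ k * ((-1) ^ k * q ^ (k * (k - 1) / 2))) =
      (∏ i ∈ range m, (1 - q ^ (i + 1))) * ((-1) ^ ((k : ℤ) - m) *
        q ^ (((k : ℤ) - m) * ((k : ℤ) - m - 1) / 2) * qBinom q k m) -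
        q ^ m * ((-1) ^ k * q ^ (k * (k - 1) / 2)) := by
  have hrange : range (m + 1) = insert 0 (Icc 1 m) := by ext; simp; omega
  have hswap : ∀ a : ℕ, (q ^ (-(a : ℤ))) ^ k = (q ^ (-(k : ℤ))) ^ a := by
    intro a; rw [← zpow_natCast, ← zpow_natCast, ← zpow_mul, ← zpow_mul]; ring_nf
  rw [← pow_mul_prod_one_sub_zpow_mul_pow hq, prod_one_sub_mul_pow_eq_sum_qBinom, hrange,
    sum_insert (by simp)]
  simp only [pow_zero, Nat.zero_mul, Nat.zero_div, qBinom_zero_right, mul_one]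
  rw [mul_add, mul_one, add_sub_cancel_left, mul_sum]
  refine sum_congr rfl fun a _ => ?_
  rw [hswap, pow_add]
  ring

end Scalar

theorem tendsto_triangle_atTop : Tendsto (fun n : ℕ => n * (n - 1) / 2) atTop atTop :=
  tendsto_atTop_mono sub_one_le_triangle (tendsto_sub_atTop_nat 1)

namespace PowerSeries

theorem tendsto_order_atTop_nhds_top_of_X_pow_dvd {R : Type*} [Semiring R] {f : ℕ → R⟦X⟧}
    {g : ℕ → ℕ} (hg : Tendsto g atTop atTop) (hf : ∀ k, X ^ g k ∣ f k) :
    Tendsto (fun k => (f k).order) atTop (𝓝 ⊤) := by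
  refine ENat.tendsto_nhds_top_iff_natCast_lt.2 fun n =>
    (hg.eventually_ge_atTop (n + 1)).mono fun k hk => ?_
  calc (n : ℕ∞) < (n + 1 : ℕ) := by exact_mod_cast n.lt_succ_self
    _ ≤ g k := by exact_mod_cast hk
    _ ≤ (f k).order := nat_le_order _ _ (X_pow_dvd_iff.1 (hf k))

section Field

variable {F : Type*} [Field F]

theorem X_pow_dvd_inv_sub_one {f : F⟦X⟧} {n : ℕ} (h : X ^ n ∣ f - 1) : X ^ n ∣ f⁻¹ - 1 := by
  rcases n.eq_zero_or_pos with rfl | hn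
  · exact pow_zero (X : F⟦X⟧) ▸ one_dvd _
  have hf : constantCoeff f = 1 := by
    rw [← sub_eq_zero, ← map_one constantCoeff, ← map_sub, ← X_dvd_iff]
    exact (dvd_pow_self X hn.ne').trans h
  rw [show f⁻¹ - 1 = -(f⁻¹ * (f - 1)) by
    rw [mul_sub, PowerSeries.inv_mul_cancel _ (by simp [hf]), mul_one, neg_sub]]
  exact (h.mul_left _).neg_right

theorem X_pow_dvd_pow_triangle_mul_qBinom_sub_inv {Q : F⟦X⟧} (hQ : X ∣ Q) {n k : ℕ}
    (hk : k ≤ n + 1) :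
    X ^ n ∣ Q ^ (k * (k - 1) / 2) * (qBinom Q n k - (∏ d ∈ range k, (1 - Q ^ (d + 1)))⁻¹) := by
  set D := ∏ d ∈ range k, (1 - Q ^ (d + 1))
  have hD : constantCoeff D = 1 := by
    simp [D, map_prod, (X_dvd_iff.1 hQ)]
  have hsub : qBinom Q n k - D⁻¹ = D⁻¹ * (∏ i ∈ range k, (1 - Q ^ (n - i)) - 1) := by
    rw [← prod_one_sub_pow_succ_mul_qBinom, mul_sub, ← mul_assoc,
      PowerSeries.inv_mul_cancel _ (by simp [hD]), one_mul, mul_one]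
  have hprod : Q ^ (n + 1 - k) ∣ ∏ i ∈ range k, (1 - Q ^ (n - i)) - 1 :=
    dvd_prod_sub_one fun i hi => by
      rw [sub_sub_cancel_left, dvd_neg]
      exact pow_dvd_pow Q (by have := mem_range.1 hi; omega)
  have hexp : n ≤ k * (k - 1) / 2 + (n + 1 - k) := by have := sub_one_le_triangle k; omega
  rw [hsub, mul_left_comm]
  refine (pow_dvd_pow_of_dvd hQ n).trans (dvd_mul_of_dvd_right ((pow_dvd_pow Q hexp).trans ?_) _)
  rw [pow_add]
  exact mul_dvd_mul_left _ hprod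

end Field

namespace WithPiTopology

open scoped PowerSeries.WithPiTopology

variable {R : Type*} [TopologicalSpace R]

theorem tendsto_zero_of_tendsto_order_atTop_nhds_top [Semiring R] {ι : Type*} {l : Filter ι}
    {f : ι → R⟦X⟧} (h : Tendsto (fun i => (f i).order) l (𝓝 ⊤)) : Tendsto f l (𝓝 0) := by
  rw [tendsto_iff_coeff_tendsto]
  refine fun d => tendsto_const_nhds.congr' ?_
  filter_upwards [ENat.tendsto_nhds_top_iff_natCast_lt.1 h d] with i hi
  rw [map_zero, coeff_of_lt_order _ hi]

theorem multipliable_of_X_pow_dvd_sub_one [CommRing R] {f : ℕ → R⟦X⟧} {g : ℕ → ℕ}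
    (hg : Tendsto g atTop atTop) (hf : ∀ k, X ^ g k ∣ f k - 1) : Multipliable f := by
  simpa using multipliable_one_add_of_tendsto_order_atTop_nhds_top R
    (tendsto_order_atTop_nhds_top_of_X_pow_dvd hg hf)

variable {F : Type*} [Field F] [TopologicalSpace F]

theorem multipliable_one_sub_C_mul_X_pow (c : ℕ → F) :
    Multipliable fun k => 1 - C (c k) * X ^ k :=
  multipliable_of_X_pow_dvd_sub_one tendsto_id fun k => by
    rw [sub_sub_cancel_left, dvd_neg]
    exact dvd_mul_left _ _

theorem multipliable_inv_one_sub_C_mul_X_pow (c : ℕ → F) :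
    Multipliable fun k => (1 - C (c k) * X ^ k)⁻¹ :=
  multipliable_of_X_pow_dvd_sub_one tendsto_id fun k => X_pow_dvd_inv_sub_one <| by
    rw [sub_sub_cancel_left, dvd_neg]
    exact dvd_mul_left _ _

theorem summable_C_mul_X_pow_triangle_mul (c : ℕ → F) (g : ℕ → F⟦X⟧) :
    Summable fun k => C (c k) * X ^ (k * (k - 1) / 2) * g k :=
  summable_of_tendsto_order_atTop_nhds_top F
    (tendsto_order_atTop_nhds_top_of_X_pow_dvd tendsto_triangle_atTop fun _ =>
      dvd_mul_of_dvd_left (dvd_mul_left _ _) _)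

variable [IsTopologicalRing F] [T2Space F]

theorem tprod_inv {β : Type*} {f : β → F⟦X⟧} (hf : Multipliable f)
    (hf' : Multipliable fun b => (f b)⁻¹) (h : ∀ b, constantCoeff (f b) ≠ 0) :
    ∏' b, (f b)⁻¹ = (∏' b, f b)⁻¹ := by
  have hmul : (∏' b, (f b)⁻¹) * ∏' b, f b = 1 := by
    simp [← hf'.tprod_mul hf, PowerSeries.inv_mul_cancel _ (h _)]
  refine (eq_inv_iff_mul_eq_one fun h0 => ?_).2 hmul
  simpa [h0] using congrArg constantCoeff hmul

theorem hasSum_tprod_one_sub_mul_pow {Q : F⟦X⟧} (hQ : constantCoeff Q = 0) (z : F⟦X⟧) :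
    HasSum (fun k => (-z) ^ k * Q ^ (k * (k - 1) / 2) * (∏ d ∈ range k, (1 - Q ^ (d + 1)))⁻¹)
      (∏' k, (1 - z * Q ^ k)) := by
  set e := fun k => (-z) ^ k * Q ^ (k * (k - 1) / 2) * (∏ d ∈ range k, (1 - Q ^ (d + 1)))⁻¹
  have hXQ : X ∣ Q := X_dvd_iff.2 hQ
  have he : Summable e := summable_of_tendsto_order_atTop_nhds_top F
    (tendsto_order_atTop_nhds_top_of_X_pow_dvd tendsto_triangle_atTop fun k =>
      dvd_mul_of_dvd_left (dvd_mul_of_dvd_right (pow_dvd_pow_of_dvd hXQ _) _) _)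
  have hprod : Multipliable fun k => 1 - z * Q ^ k :=
    multipliable_of_X_pow_dvd_sub_one tendsto_id fun k => by
      rw [sub_sub_cancel_left, dvd_neg]
      exact dvd_mul_of_dvd_right (pow_dvd_pow_of_dvd hXQ k) _
  have hdiff : Tendsto (fun n => ∏ k ∈ range n, (1 - z * Q ^ k) - ∑ k ∈ range (n + 1), e k)
      atTop (𝓝 0) := by
    refine tendsto_zero_of_tendsto_order_atTop_nhds_top
      (tendsto_order_atTop_nhds_top_of_X_pow_dvd tendsto_id fun n => ?_)
    rw [prod_one_sub_mul_pow_eq_sum_qBinom, ← sum_sub_distrib]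
    refine dvd_sum fun k hk => ?_
    have hterm : (-1) ^ k * Q ^ (k * (k - 1) / 2) * qBinom Q n k * z ^ k - e k =
        (-z) ^ k * (Q ^ (k * (k - 1) / 2) *
          (qBinom Q n k - (∏ d ∈ range k, (1 - Q ^ (d + 1)))⁻¹)) := by
      simp only [e, neg_pow z]
      ring
    rw [hterm]
    exact dvd_mul_of_dvd_right
      (X_pow_dvd_pow_triangle_mul_qBinom_sub_inv hXQ (mem_range.1 hk).le) _
  have hlim := ((he.hasSum.tendsto_sum_nat.comp (tendsto_add_atTop_nat 1)).add hdiff)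
  rw [add_zero] at hlim
  rw [tendsto_nhds_unique hprod.hasProd.tendsto_prod_nat (hlim.congr fun n => by simp)]
  exact he.hasSum

theorem tprod_one_sub_C_mul_X_pow_eq_mul (c : ℕ → F) :
    ∏' k, (1 - C (c k) * X ^ k) = C (1 - c 0) * ∏' k, (1 - C (c (k + 1)) * X ^ (k + 1)) := by
  have hm : Multipliable fun k => 1 - C (c (k + 1)) * X ^ (k + 1) :=
    multipliable_of_X_pow_dvd_sub_one tendsto_id fun k => by
      rw [sub_sub_cancel_left, dvd_neg]
      exact dvd_mul_of_dvd_right (pow_dvd_pow X k.le_succ) _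
  rw [tprod_eq_zero_mul' (f := fun k => 1 - C (c k) * X ^ k) hm]
  simp

theorem tprod_one_sub_C_mul_X_pow_eq_zero {c : ℕ → F} (h : c 0 = 1) :
    ∏' k, (1 - C (c k) * X ^ k) = 0 := by
  rw [tprod_one_sub_C_mul_X_pow_eq_mul, h, sub_self, map_zero, zero_mul]

theorem tprod_one_sub_C_pow_succ_mul_X_pow (q : F) :
    ∏' k, (1 - C (q ^ (k + 1)) * X ^ k) =
      C (1 - q) * ∏' d, (1 - C (q ^ (d + 2)) * X ^ (d + 1)) := by
  rw [tprod_one_sub_C_mul_X_pow_eq_mul (fun k => q ^ (k + 1)), zero_add, pow_one]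

theorem hasSum_tprod_one_sub_C_mul_X_pow (q z : F) :
    HasSum (fun k => C (z ^ k * ((-1) ^ k * q ^ (k * (k - 1) / 2))) * X ^ (k * (k - 1) / 2) *
        (∏ d ∈ range k, (1 - C (q ^ (d + 1)) * X ^ (d + 1)))⁻¹)
      (∏' k, (1 - C (z * q ^ k) * X ^ k)) := by
  convert hasSum_tprod_one_sub_mul_pow (Q := C q * X) (by simp) (C z) using 1
  · ext1 k
    simp only [mul_pow, ← map_pow, ← map_neg, neg_pow z, map_mul]
    ring
  · congr! 3 with k
    rw [mul_pow, ← map_pow, ← mul_assoc, ← map_mul]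

theorem tprod_one_sub_C_zpow_mul_X_pow_mul_inv {q : F} (hq0 : q ≠ 0) (hq1 : 1 - q ≠ 0) (a : ℕ) :
    ∏' k : ℕ, (1 - C (q ^ ((k : ℤ) - a)) * X ^ k) * (1 - C (q ^ (k + 1)) * X ^ k)⁻¹ =
      (∏' k, (1 - C (q ^ (-(a : ℤ)) * q ^ k) * X ^ k)) *
        (C (1 - q) * ∏' d, (1 - C (q ^ (d + 2)) * X ^ (d + 1)))⁻¹ := by
  have hexp : ∀ k : ℕ, q ^ ((k : ℤ) - a) = q ^ (-(a : ℤ)) * q ^ k := fun k => by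
    rw [sub_eq_neg_add, zpow_add₀ hq0, zpow_natCast]
  have hcoeff : ∀ k : ℕ, constantCoeff (1 - C (q ^ (k + 1)) * X ^ k) ≠ 0 := by
    rintro (_ | k)
    · simpa using hq1
    · simp
  simp_rw [hexp]
  rw [(multipliable_one_sub_C_mul_X_pow _).tprod_mul (multipliable_inv_one_sub_C_mul_X_pow _),
    tprod_inv (multipliable_one_sub_C_mul_X_pow _) (multipliable_inv_one_sub_C_mul_X_pow _) hcoeff,
    tprod_one_sub_C_pow_succ_mul_X_pow]

theorem sum_Icc_C_qBinom_mul_tprod_one_sub_C_zpow_mul_X_pow {q : F} (hq0 : q ≠ 0) (m : ℕ) :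
    ∑ a ∈ Icc 1 m, C ((-1 : F) ^ a * q ^ (a * (a - 1) / 2 + m) * qBinom q m a) *
        ∏' k, (1 - C (q ^ (-(a : ℤ)) * q ^ k) * X ^ k) =
      C (∏ i ∈ range m, (1 - q ^ (i + 1))) *
        ∑' k : ℕ, C ((-1 : F) ^ ((k : ℤ) - m) * q ^ (((k : ℤ) - m) * ((k : ℤ) - m - 1) / 2) *
          qBinom q k m) * X ^ (k * (k - 1) / 2) *
            (∏ d ∈ range k, (1 - C (q ^ (d + 1)) * X ^ (d + 1)))⁻¹ := by
  have h1 := hasSum_sum fun a (_ : a ∈ Icc 1 m) =>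
    (hasSum_tprod_one_sub_C_mul_X_pow q (q ^ (-(a : ℤ)))).mul_left
      (C ((-1 : F) ^ a * q ^ (a * (a - 1) / 2 + m) * qBinom q m a))
  have hS := summable_C_mul_X_pow_triangle_mul (fun k : ℕ => (-1 : F) ^ ((k : ℤ) - m) *
    q ^ (((k : ℤ) - m) * ((k : ℤ) - m - 1) / 2) * qBinom q k m)
      fun k => (∏ d ∈ range k, (1 - C (q ^ (d + 1)) * X ^ (d + 1)))⁻¹
  have h2 := (hS.hasSum.mul_left (C (∏ i ∈ range m, (1 - q ^ (i + 1))))).sub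
    ((hasSum_tprod_one_sub_C_mul_X_pow q 1).mul_left (C (q ^ m)))
  rw [tprod_one_sub_C_mul_X_pow_eq_zero (by simp), mul_zero, sub_zero] at h2
  refine h1.unique (h2.congr_fun fun k => ?_)
  have hscalar := sum_Icc_qBinom_mul_zpow_pow hq0 m k
  simp only [← mul_assoc, ← sum_mul] at hscalar
  simp only [← mul_assoc, ← map_mul, ← sum_mul, ← map_sum, ← sub_mul, ← map_sub]
  congr 3
  linear_combination hscalar

theorem tprod_inv_mul_tsum_qBinom_eq {q : F} (hq0 : q ≠ 0) {m : ℕ} (hm : 1 ≤ m)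
    (hq : ∀ i ∈ Icc 1 m, q ^ i ≠ 1) :
    (∏' d : ℕ, (1 - C (q ^ (d + 2)) * X ^ (d + 1)))⁻¹ *
        ∑' k : ℕ, C ((-1 : F) ^ ((k : ℤ) - m) * q ^ (((k : ℤ) - m) * ((k : ℤ) - m - 1) / 2) *
            qBinom q k m) * X ^ (k * (k - 1) / 2) *
          (∏ d ∈ range k, (1 - C (q ^ (d + 1)) * X ^ (d + 1)))⁻¹ =
      C (∏ i ∈ Icc 1 (m - 1), (1 - q ^ (i + 1)))⁻¹ *
        ∑ a ∈ Icc 1 m, C ((-1 : F) ^ a * q ^ (a * (a - 1) / 2 + m) * qBinom q m a) *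
          ∏' k : ℕ, (1 - C (q ^ ((k : ℤ) - a)) * X ^ k) * (1 - C (q ^ (k + 1)) * X ^ k)⁻¹ := by
  set π := ∏ i ∈ Icc 1 (m - 1), (1 - q ^ (i + 1))
  have hq1 : 1 - q ≠ 0 := sub_ne_zero.2 fun h => hq 1 (by simp [hm]) (by simp [h])
  have hπ : π ≠ 0 := prod_ne_zero_iff.2 fun i hi =>
    sub_ne_zero.2 fun h => hq (i + 1) (by simp at hi ⊢; omega) h.symm
  have hqq : ∏ i ∈ range m, (1 - q ^ (i + 1)) = (1 - q) * π := by
    rw [show range m = insert 0 (Icc 1 (m - 1)) by ext; simp; omega, prod_insert (by simp),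
      zero_add, pow_one]
  simp_rw [tprod_one_sub_C_zpow_mul_X_pow_mul_inv hq0 hq1, ← mul_assoc, ← sum_mul,
    sum_Icc_C_qBinom_mul_tprod_one_sub_C_zpow_mul_X_pow hq0, hqq, PowerSeries.mul_inv_rev, C_inv]
  have hunit : C π⁻¹ * (C (1 - q) * C π) * C (1 - q)⁻¹ = (1 : F⟦X⟧) := by
    simp only [← map_mul]
    rw [show π⁻¹ * ((1 - q) * π) * (1 - q)⁻¹ = 1 by field_simp, map_one]
  set S := ∑' k : ℕ, C ((-1 : F) ^ ((k : ℤ) - m) * q ^ (((k : ℤ) - m) * ((k : ℤ) - m - 1) / 2) *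
    qBinom q k m) * X ^ (k * (k - 1) / 2) * (∏ d ∈ range k, (1 - C (q ^ (d + 1)) * X ^ (d + 1)))⁻¹
  rw [map_mul C (1 - q) π]
  linear_combination (-((∏' d : ℕ, (1 - C (q ^ (d + 2)) * X ^ (d + 1)))⁻¹ * S)) * hunit

end WithPiTopology

end PowerSeries

theorem t_ne_zero : t ≠ 0 := RatFunc.X_ne_zero

theorem t_pow_ne_one {i : ℕ} (hi : 0 < i) : t ^ i ≠ 1 := by
  rw [t, ← RatFunc.algebraMap_X, ← map_pow, ← map_one (algebraMap (Polynomial ℚ) K),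
    (RatFunc.algebraMap_injective ℚ).ne_iff]
  exact fun h => by simpa [hi.ne'] using congrArg Polynomial.natDegree h

theorem gb_eq_qBinom (m a : ℕ) : gb m a = qBinom t m a := by
  rw [gb]
  split_ifs with ha
  · rw [prod_div_distrib, div_eq_iff (prod_ne_zero_iff.2 fun i _ =>
      sub_ne_zero.2 (t_pow_ne_one i.succ_pos).symm), mul_comm, prod_one_sub_pow_succ_mul_qBinom]
  · rw [qBinom_eq_zero_of_lt t (by omega)]

theorem instTopologicalSpacePowerSeriesK_eq :
    instTopologicalSpacePowerSeriesK = PowerSeries.WithPiTopology.instTopologicalSpace K := by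
  refine le_antisymm (continuous_id_iff_le.1 ?_) (continuous_id_iff_le.1 ?_)
  · change @Continuous (PowerSeries K) ((Unit →₀ ℕ) → K) _ Pi.topologicalSpace id
    refine continuous_pi fun d => ?_
    rw [show (fun f : PowerSeries K => id f d) = PowerSeries.coeff (d ()) from
      funext fun f => by rw [PowerSeries.coeff_def rfl]; rfl]
    exact (continuous_apply (d ())).comp
      (continuous_induced_dom (f := fun (f : PowerSeries K) (n : ℕ) => PowerSeries.coeff n f))
  · let _ := PowerSeries.WithPiTopology.instTopologicalSpace K
    exact continuous_induced_rng.2 (continuous_pi (PowerSeries.WithPiTopology.continuous_coeff K))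

instance : DiscreteTopology K := ⟨rfl⟩

open PowerSeries in
/-- The closed form for the generating function `∑_n E(H^{[n]}_m; t) qⁿ` of the
E-polynomials of the strata of the Hilbert scheme of points on `ℂ²`:
`∏_{d=1}^∞ (1 - t^{d+1} q^d)⁻¹ ·
   ∑_{k=0}^∞ (-1)^{k-m} t^{(k-m)(k-m-1)/2} [k choose m]_t q^{k(k-1)/2}
     ∏_{d=1}^{k} (1 - t^d q^d)⁻¹
 = ∏_{i=1}^{m-1} (1 - t^{i+1})⁻¹ ·
   ∑_{a=1}^{m} (-1)^{a} t^{a(a-1)/2 + m} [m choose a]_t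
     ∏_{k=0}^∞ (1 - t^{k-a} q^k)(1 - t^{k+1} q^k)⁻¹`. -/
theorem stmt13 (m : ℕ) (hm : 1 ≤ m) :
    (∏' d : ℕ, (1 - C (R := K) (t ^ (d + 2)) * X ^ (d + 1)))⁻¹ *
        ∑' k : ℕ,
          C (R := K) ((-1 : K) ^ ((k : ℤ) - (m : ℤ)) *
              t ^ (((k : ℤ) - (m : ℤ)) * ((k : ℤ) - (m : ℤ) - 1) / 2) *
              gb k m) *
            X ^ (k * (k - 1) / 2) *
            (∏ d ∈ Finset.range k, (1 - C (R := K) (t ^ (d + 1)) * X ^ (d + 1)))⁻¹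
      = C (R := K) (∏ i ∈ Finset.Icc 1 (m - 1), (1 - t ^ (i + 1)))⁻¹ *
          ∑ a ∈ Finset.Icc 1 m,
            C (R := K) ((-1 : K) ^ a * t ^ (a * (a - 1) / 2 + m) * gb m a) *
              ∏' k : ℕ,
                (1 - C (R := K) (t ^ ((k : ℤ) - (a : ℤ))) * X ^ k) *
                  (1 - C (R := K) (t ^ (k + 1)) * X ^ k)⁻¹ := by
  simp only [gb_eq_qBinom]
  rw [instTopologicalSpacePowerSeriesK_eq]
  exact PowerSeries.WithPiTopology.tprod_inv_mul_tsum_qBinom_eq t_ne_zero hm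
    fun i hi => t_pow_ne_one (mem_Icc.1 hi).1

end
end
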